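/- arXiv:math/0601172 — 2 statements merged into one kernel-verified Lean document; each statement's English description precedes it below -/
import Mathlib

section
/- Let t be a positive integer such that every finite graph with no K_{t+1}-minor is t-colourable (i.e., Hadwiger's Conjecture holds for t). Then every finite graph G with η(G) ≥ t satisfies (2η(G) − t)(2α(G) − 1) ≥ 2|V(G)| − t. -/
open SimpleGraph

/-- A set of vertices is independent: no two of its vertices are adjacent. -/
def IsIndepSet {V : Type*} (G : SimpleGraph V) (s : Set V) : Prop :=
  s.Pairwise fun a b => ¬ G.Adj a b

/-- The independence number of a graph. -/
noncomputable def indepNum {V : Type*} [Fintype V] (G : SimpleGraph V) : ℕ :=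
  sSup {n | ∃ s : Finset V, _root_.IsIndepSet G ↑s ∧ s.card = n}

/-- A set of vertices is connected if it induces a connected subgraph. -/
def IsConnSet {V : Type*} (G : SimpleGraph V) (s : Set V) : Prop :=
  (G.induce s).Connected

/-- A set of vertices is dominating if every vertex outside it has a neighbour in it. -/
def IsDomSet {V : Type*} (G : SimpleGraph V) (s : Set V) : Prop :=
  ∀ v ∉ s, ∃ u ∈ s, G.Adj u v

/-- `G` has a `K_n`-minor, witnessed by `n` pairwise disjoint nonempty connected
branch sets with an edge between each pair. -/
def HasCliqueMinor {V : Type*} (G : SimpleGraph V) (n : ℕ) : Prop :=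
  ∃ B : Fin n → Set V,
    (∀ i, (B i).Nonempty) ∧
    (∀ i, IsConnSet G (B i)) ∧
    (Pairwise fun i j => Disjoint (B i) (B j)) ∧
    (Pairwise fun i j => ∃ u ∈ B i, ∃ v ∈ B j, G.Adj u v)

/-- The Hadwiger number: the largest `n` such that `K_n` is a minor of `G`. -/
noncomputable def hadwigerNum {V : Type*} [Fintype V] (G : SimpleGraph V) : ℕ :=
  sSup {n | HasCliqueMinor G n}

/-!
We prove `2n - t ≤ (2k - t)(2a - 1)` for every `k ≥ max(t, η(G))` and `a ≥ max(1, α(G))`, by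
induction on `n = |V(G)|`. Without a `K_{t+1}`-minor, `G` is `t`-colourable, so `n ≤ tα(G)`.
A disconnected graph splits into two parts with no edges between them, and the independence
numbers of the parts add up. A connected graph has (Duchet–Meyniel) a connected dominating set `D`
with `|D| < 2α(G)`: grow a connected set `C` with an independent `I ⊆ C` and `|C| < 2|I|`, adding
a vertex at distance two from `C` together with the vertex joining it to `C`. Contracting `D`
extends every clique minor of `G - D`, so `η(G - D) < η(G)`, and the bound for `G - D` with `k - 1`
in place of `k` gives the bound for `G`.
-/

theorem Fintype.card_add_card_compl_set {V : Type*} [Fintype V] (s : Set V) [Fintype s]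
    [Fintype ↥sᶜ] : Fintype.card s + Fintype.card ↥sᶜ = Fintype.card V := by
  rw [Fintype.card_compl_set]
  have := set_fintype_card_le_univ s
  omega

theorem indepNum_eq_simpleGraph_indepNum {V : Type*} [Fintype V] (G : SimpleGraph V) :
    _root_.indepNum G = G.indepNum := by
  simp only [_root_.indepNum, SimpleGraph.indepNum, isNIndepSet_iff]
  rfl

namespace SimpleGraph

variable {V : Type*} {G : SimpleGraph V}

theorem one_le_indepNum [Finite V] [Nonempty V] : 1 ≤ G.indepNum := by
  obtain ⟨v⟩ := ‹Nonempty V›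
  simpa using IsIndepSet.card_le_indepNum (G := G) (t := {v}) (by simp)

theorem Colorable.card_le_mul_indepNum [Fintype V] {n : ℕ} (h : G.Colorable n) :
    Fintype.card V ≤ n * G.indepNum := by
  classical
  obtain ⟨C⟩ := h
  calc Fintype.card V = ∑ c : Fin n, (Finset.univ.filter (C · = c)).card :=
        Finset.card_eq_sum_card_fiberwise fun v _ => Finset.mem_univ (C v)
    _ ≤ ∑ _c : Fin n, G.indepNum := Finset.sum_le_sum fun c _ =>
        IsIndepSet.card_le_indepNum <| by
          simpa [Coloring.colorClass] using C.isIndepSet_colorClass c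
    _ = n * G.indepNum := by simp

theorem IsIndepSet.image_val {s : Set V} {I : Set s} (h : (G.induce s).IsIndepSet I) :
    G.IsIndepSet (Subtype.val '' I) := by
  rintro _ ⟨a, ha, rfl⟩ _ ⟨b, hb, rfl⟩ hab
  exact h ha hb (ne_of_apply_ne _ hab)

theorem indepNum_induce_le [Finite V] (s : Set V) : (G.induce s).indepNum ≤ G.indepNum := by
  obtain ⟨I, hI⟩ := (G.induce s).exists_isNIndepSet_indepNum
  rw [← hI.card_eq, ← I.card_map (Function.Embedding.subtype _)]
  exact IsIndepSet.card_le_indepNum (by simpa using hI.isIndepSet.image_val)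

theorem indepNum_induce_add_indepNum_induce_compl_le [Finite V] {s : Set V}
    (hs : ∀ a ∈ s, ∀ b ∉ s, ¬G.Adj a b) :
    (G.induce s).indepNum + (G.induce sᶜ).indepNum ≤ G.indepNum := by
  classical
  obtain ⟨I, hI⟩ := (G.induce s).exists_isNIndepSet_indepNum
  obtain ⟨J, hJ⟩ := (G.induce sᶜ).exists_isNIndepSet_indepNum
  set I' := I.map (Function.Embedding.subtype _)
  set J' := J.map (Function.Embedding.subtype _)
  have hI' : ∀ a ∈ I', a ∈ s := by simp +contextual [I']
  have hJ' : ∀ b ∈ J', b ∉ s := by simp +contextual [J']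
  have hdisj : Disjoint I' J' :=
    Finset.disjoint_left.2 fun a ha ha' => hJ' a ha' (hI' a ha)
  have hindep : G.IsIndepSet ↑(I' ∪ J') := by
    rw [Finset.coe_union, isIndepSet_iff, Set.pairwise_union]
    refine ⟨by simpa [I'] using hI.isIndepSet.image_val,
      by simpa [J'] using hJ.isIndepSet.image_val, fun a ha b hb _ => ?_⟩
    exact ⟨hs a (hI' a ha) b (hJ' b hb), fun h => hs a (hI' a ha) b (hJ' b hb) h.symm⟩
  calc _ = (I' ∪ J').card := by
        rw [Finset.card_union_of_disjoint hdisj, Finset.card_map, Finset.card_map,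
          hI.card_eq, hJ.card_eq]
    _ ≤ G.indepNum := hindep.card_le_indepNum

end SimpleGraph

structure IsCliqueModel {V : Type*} (G : SimpleGraph V) {n : ℕ} (B : Fin n → Set V) : Prop where
  nonempty : ∀ i, (B i).Nonempty
  isConnSet : ∀ i, IsConnSet G (B i)
  disjoint : Pairwise fun i j => Disjoint (B i) (B j)
  adj : Pairwise fun i j => ∃ u ∈ B i, ∃ v ∈ B j, G.Adj u v

section CliqueMinor

variable {V : Type*} {G : SimpleGraph V}

theorem hasCliqueMinor_iff {n : ℕ} :
    HasCliqueMinor G n ↔ ∃ B : Fin n → Set V, IsCliqueModel G B :=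
  ⟨fun ⟨B, h₁, h₂, h₃, h₄⟩ => ⟨B, h₁, h₂, h₃, h₄⟩,
    fun ⟨B, h₁, h₂, h₃, h₄⟩ => ⟨B, h₁, h₂, h₃, h₄⟩⟩

theorem IsCliqueModel.hasCliqueMinor {n : ℕ} {B : Fin n → Set V} (h : IsCliqueModel G B) :
    HasCliqueMinor G n :=
  hasCliqueMinor_iff.2 ⟨B, h⟩

theorem hasCliqueMinor_zero (G : SimpleGraph V) : HasCliqueMinor G 0 :=
  ⟨Fin.elim0, fun i => i.elim0, fun i => i.elim0, fun i => i.elim0, fun i => i.elim0⟩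

theorem HasCliqueMinor.le_card [Fintype V] {n : ℕ} (h : HasCliqueMinor G n) :
    n ≤ Fintype.card V := by
  obtain ⟨B, hB⟩ := hasCliqueMinor_iff.1 h
  choose f hf using hB.nonempty
  simpa using Fintype.card_le_of_injective f fun i j hij => by_contra fun hne =>
    (hB.disjoint hne).ne_of_mem (hf i) (hij ▸ hf j) rfl

variable [Fintype V]

theorem bddAbove_hasCliqueMinor (G : SimpleGraph V) : BddAbove {n | HasCliqueMinor G n} :=
  ⟨Fintype.card V, fun _ h => h.le_card⟩

theorem HasCliqueMinor.le_hadwigerNum {n : ℕ} (h : HasCliqueMinor G n) : n ≤ hadwigerNum G :=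
  le_csSup (bddAbove_hasCliqueMinor G) h

theorem hasCliqueMinor_hadwigerNum (G : SimpleGraph V) : HasCliqueMinor G (hadwigerNum G) :=
  Nat.sSup_mem ⟨0, hasCliqueMinor_zero G⟩ (bddAbove_hasCliqueMinor G)

theorem hadwigerNum_le_card (G : SimpleGraph V) : hadwigerNum G ≤ Fintype.card V :=
  (hasCliqueMinor_hadwigerNum G).le_card

end CliqueMinor

section Induce

variable {V : Type*} {G : SimpleGraph V} {s : Set V}

theorem IsConnSet.image_val {B : Set s} (h : IsConnSet (G.induce s) B) :
    IsConnSet G (Subtype.val '' B) := by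
  have e : (G.induce s).induce B ≃g G.induce (Subtype.val '' B) :=
    ⟨Equiv.Set.image _ B Subtype.val_injective, by simp⟩
  exact e.connected_iff.1 h

theorem IsCliqueModel.image_val {n : ℕ} {B : Fin n → Set s} (h : IsCliqueModel (G.induce s) B) :
    IsCliqueModel G fun i => Subtype.val '' B i where
  nonempty i := (h.nonempty i).image _
  isConnSet i := (h.isConnSet i).image_val
  disjoint _ _ hij := (Set.disjoint_image_iff Subtype.val_injective).2 (h.disjoint hij)
  adj _ _ hij := by
    obtain ⟨u, hu, v, hv, huv⟩ := h.adj hij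
    exact ⟨u, Set.mem_image_of_mem _ hu, v, Set.mem_image_of_mem _ hv, huv⟩

theorem IsCliqueModel.cons {n : ℕ} {B : Fin n → Set V} (hB : IsCliqueModel G B) {D : Set V}
    (hne : D.Nonempty) (hD : IsConnSet G D) (hdisj : ∀ i, Disjoint D (B i))
    (hadj : ∀ i, ∃ u ∈ D, ∃ v ∈ B i, G.Adj u v) :
    IsCliqueModel G (Fin.cons D B : Fin (n + 1) → Set V) where
  nonempty := Fin.cases hne hB.nonempty
  isConnSet := Fin.cases hD hB.isConnSet
  disjoint := pairwise_fin_succ_iff.2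
    ⟨fun i => (hdisj i).symm, hdisj, fun _ _ hij => hB.disjoint hij⟩
  adj := pairwise_fin_succ_iff.2
    ⟨fun i => by
      obtain ⟨u, hu, v, hv, huv⟩ := hadj i
      exact ⟨v, hv, u, hu, huv.symm⟩, hadj, fun _ _ hij => hB.adj hij⟩

variable [Fintype V] [Fintype s]

theorem hadwigerNum_induce_le : hadwigerNum (G.induce s) ≤ hadwigerNum G := by
  obtain ⟨B, hB⟩ := hasCliqueMinor_iff.1 (hasCliqueMinor_hadwigerNum (G.induce s))
  exact hB.image_val.hasCliqueMinor.le_hadwigerNum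

theorem hadwigerNum_induce_compl_lt {D : Set V} [Fintype ↥Dᶜ] (hne : D.Nonempty)
    (hD : IsConnSet G D) (hdom : IsDomSet G D) :
    hadwigerNum (G.induce Dᶜ) < hadwigerNum G := by
  obtain ⟨B, hB⟩ := hasCliqueMinor_iff.1 (hasCliqueMinor_hadwigerNum (G.induce Dᶜ))
  refine (hB.image_val.cons hne hD (fun i => ?_) (fun i => ?_)).hasCliqueMinor.le_hadwigerNum
  · exact Set.disjoint_right.2 fun _ ⟨v, _, hv⟩ => hv ▸ v.2
  · obtain ⟨_, ⟨v, hv, rfl⟩⟩ := hB.image_val.nonempty i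
    obtain ⟨u, hu, huv⟩ := hdom v v.2
    exact ⟨u, hu, v, ⟨v, hv, rfl⟩, huv⟩

end Induce

section DominatingSet

variable {V : Type*} {G : SimpleGraph V}

theorem isConnSet_singleton (u : V) : IsConnSet G {u} := by
  rw [IsConnSet, induce_singleton_eq_top]
  exact connected_top

theorem IsConnSet.insert {s : Set V} {u c : V} (hs : IsConnSet G s) (hc : c ∈ s)
    (hadj : G.Adj u c) : IsConnSet G (insert u s) := by
  simpa [IsConnSet, Set.singleton_union] using connected_induce_union
    (isConnSet_singleton (G := G) u).preconnected hs.preconnected rfl hc hadj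

theorem exists_adj_adj_of_not_isDomSet (hconn : G.Connected) {C : Set V} (hC : C.Nonempty)
    (hdom : ¬IsDomSet G C) :
    ∃ c ∈ C, ∃ u ∉ C, ∃ x ∉ C, G.Adj c u ∧ G.Adj u x ∧ ∀ c ∈ C, ¬G.Adj c x := by
  obtain ⟨v, hvC, hvN⟩ : ∃ v ∉ C, ∀ c ∈ C, ¬G.Adj c v := by
    simpa [IsDomSet] using hdom
  obtain ⟨c₀, hc₀⟩ := hC
  obtain ⟨⟨⟨u, x⟩, hux⟩, -, hu, hx⟩ := (hconn c₀ v).some.exists_boundary_dart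
    {y | y ∈ C ∨ ∃ c ∈ C, G.Adj c y} (.inl hc₀)
    fun h => h.elim hvC fun ⟨c, hc, hcv⟩ => hvN c hc hcv
  simp only [Set.mem_ofPred_eq, not_or, not_exists, not_and] at hu hx
  obtain ⟨hxC, hxN⟩ := hx
  have huC : u ∉ C := fun h => hxN u h hux
  obtain ⟨c, hc, hcu⟩ := hu.resolve_left huC
  exact ⟨c, hc, u, huC, x, hxC, hcu, hux, hxN⟩

theorem exists_isDomSet_card_lt_two_mul_indepNum [Fintype V] (hconn : G.Connected) :
    ∃ D : Finset V, D.Nonempty ∧ IsConnSet G D ∧ IsDomSet G D ∧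
      D.card < 2 * G.indepNum := by
  classical
  let P : Finset V × Finset V → Prop := fun p =>
    p.2 ⊆ p.1 ∧ IsConnSet G p.1 ∧ G.IsIndepSet p.2 ∧ p.1.card < 2 * p.2.card
  obtain ⟨v⟩ := hconn.nonempty
  have hv : P ({v}, {v}) := by simpa [P] using isConnSet_singleton v
  obtain ⟨⟨C, I⟩, hCI, hmax⟩ :=
    (Finset.univ.filter P).exists_max_image (fun p => p.1.card) ⟨_, by simpa using hv⟩
  obtain ⟨hIC, hC, hI, hcard⟩ : P (C, I) := (Finset.mem_filter.1 hCI).2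
  dsimp only at hIC hC hI hcard hmax
  have hCne : C.Nonempty := by
    rw [← Finset.card_pos]
    have := Finset.card_le_card hIC
    omega
  refine ⟨C, hCne, hC, ?_, hcard.trans_le (by gcongr; exact hI.card_le_indepNum)⟩
  by_contra hdom
  obtain ⟨c, hc, u, hu, x, hx, hcu, hux, hxN⟩ :=
    exists_adj_adj_of_not_isDomSet hconn (Finset.coe_nonempty.2 hCne) hdom
  have hC' : (insert x (insert u C)).card = C.card + 2 := by
    rw [Finset.card_insert_of_notMem (by simpa [hux.ne.symm] using hx),
      Finset.card_insert_of_notMem (by simpa using hu)]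
  have hext : P (insert x (insert u C), insert x I) := by
    refine ⟨Finset.insert_subset_insert _ (hIC.trans (Finset.subset_insert _ _)), ?_, ?_, ?_⟩
    · simpa using (hC.insert hc hcu.symm).insert (Set.mem_insert u _) hux.symm
    · rw [Finset.coe_insert, isIndepSet_iff, Set.pairwise_insert]
      exact ⟨hI, fun b hb _ => ⟨fun h => hxN b (hIC hb) h.symm, hxN b (hIC hb)⟩⟩
    · dsimp only
      rw [hC', Finset.card_insert_of_notMem (fun h => hx (hIC h))]
      omega
  have := hmax _ (Finset.mem_filter.2 ⟨Finset.mem_univ _, hext⟩)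
  dsimp only at this
  omega

end DominatingSet

theorem exists_separation_of_not_connected {V : Type*} {G : SimpleGraph V} [Nonempty V]
    (h : ¬G.Connected) :
    ∃ s : Set V, s.Nonempty ∧ sᶜ.Nonempty ∧ ∀ a ∈ s, ∀ b ∉ s, ¬G.Adj a b := by
  obtain ⟨v, w, hvw⟩ : ∃ v w, ¬G.Reachable v w := by
    simpa [connected_iff, Preconnected] using h
  exact ⟨{u | G.Reachable v u}, ⟨v, .rfl⟩, ⟨w, hvw⟩,
    fun a ha b hb hab => hb (ha.trans hab.reachable)⟩

def HadwigerBound (t k a n : ℕ) : Prop :=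
  2 * (n : ℤ) - t ≤ (2 * k - t) * (2 * a - 1)

namespace HadwigerBound

variable {t k a n : ℕ}

theorem of_le_mul (htk : t ≤ k) (ha : 1 ≤ a) (hn : n ≤ t * a) : HadwigerBound t k a n := by
  unfold HadwigerBound
  have : (n : ℤ) ≤ t * a := by exact_mod_cast hn
  nlinarith

theorem mono (htk : t ≤ 2 * k) (h : HadwigerBound t k a n) {a' : ℕ} (ha : a ≤ a') :
    HadwigerBound t k a' n := by
  unfold HadwigerBound at *
  nlinarith

theorem add (htk : t ≤ k) {a' n' : ℕ} (h : HadwigerBound t k a n) (h' : HadwigerBound t k a' n') :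
    HadwigerBound t k (a + a') (n + n') := by
  unfold HadwigerBound at *
  push_cast
  nlinarith

theorem succ_add {m : ℕ} (h : HadwigerBound t k a n) (hm : m < 2 * a) :
    HadwigerBound t (k + 1) a (n + m) := by
  unfold HadwigerBound at *
  push_cast
  nlinarith

end HadwigerBound

theorem hadwigerBound_of_hadwiger {t : ℕ}
    (hadw : ∀ (W : Type) [Fintype W] (H : SimpleGraph W),
      ¬ HasCliqueMinor H (t + 1) → H.Colorable t) (n : ℕ) :
    ∀ (V : Type) [Fintype V] (G : SimpleGraph V) (k a : ℕ), Fintype.card V = n → t ≤ k →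
      hadwigerNum G ≤ k → G.indepNum ≤ a → 1 ≤ a → HadwigerBound t k a n := by
  induction n using Nat.strong_induction_on with
  | _ n ih =>
  intro V _ G k a hn htk hk ha ha₁
  subst hn
  by_cases hminor : HasCliqueMinor G (t + 1)
  swap
  · exact .of_le_mul htk ha₁
      ((hadw V G hminor).card_le_mul_indepNum.trans (Nat.mul_le_mul_left t ha))
  have htk' : t + 1 ≤ k := hminor.le_hadwigerNum.trans hk
  have : Nonempty V := Fintype.card_pos_iff.1 (by have := hminor.le_card; omega)
  classical
  by_cases hconn : G.Connected
  · obtain ⟨D, hne, hD, hdom, hDα⟩ := exists_isDomSet_card_lt_two_mul_indepNum hconn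
    obtain ⟨k, rfl⟩ : ∃ k', k = k' + 1 := ⟨k - 1, by omega⟩
    have hcard := Fintype.card_add_card_compl_set (D : Set V)
    simp only [Finset.coe_sort_coe, Fintype.card_coe] at hcard
    rw [← hcard, add_comm D.card]
    refine (ih _ ?_ _ (G.induce (D : Set V)ᶜ) k a rfl (by omega) ?_
      ((indepNum_induce_le _).trans ha) ha₁).succ_add (hDα.trans_le (by gcongr))
    · have := hne.card_pos
      omega
    · have := hadwigerNum_induce_compl_lt (Finset.coe_nonempty.2 hne) hD hdom
      omega
  · obtain ⟨s, hs, hsc, hsep⟩ := exists_separation_of_not_connected hconn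
    have : Nonempty s := hs.to_subtype
    have : Nonempty ↥sᶜ := hsc.to_subtype
    have hcard := Fintype.card_add_card_compl_set s
    have hs₁ := ih _ (by have := Fintype.card_pos (α := ↥sᶜ); omega) s (G.induce s) k _ rfl htk
      (hadwigerNum_induce_le.trans hk) le_rfl one_le_indepNum
    have hs₂ := ih _ (by have := Fintype.card_pos (α := s); omega) ↥sᶜ (G.induce sᶜ) k _ rfl htk
      (hadwigerNum_induce_le.trans hk) le_rfl one_le_indepNum
    rw [← hcard]
    exact (hs₁.add htk hs₂).mono (by omega)
      ((indepNum_induce_add_indepNum_induce_compl_le hsep).trans ha)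

theorem stmt_4 (t : ℕ) (ht : 1 ≤ t)
    (hadw : ∀ (W : Type) [Fintype W] (H : SimpleGraph W),
      ¬ HasCliqueMinor H (t + 1) → H.Colorable t)
    {V : Type} [Fintype V] (G : SimpleGraph V) (hG : t ≤ hadwigerNum G) :
    (2 * (Fintype.card V : ℤ) - t) ≤ (2 * hadwigerNum G - t) * (2 * _root_.indepNum G - 1) := by
  have : Nonempty V := Fintype.card_pos_iff.1 (by have := hadwigerNum_le_card G; omega)
  rw [indepNum_eq_simpleGraph_indepNum]
  exact hadwigerBound_of_hadwiger hadw _ V G _ _ rfl hG le_rfl le_rfl one_le_indepNum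
end

section
/- If D is a connected set of vertices in a finite graph G containing an independent set S with |D| = 2|S| − 1, and D is not dominating, then there exist vertices v, w with v at distance exactly 2 from D, w adjacent to v and to some vertex of D, such that D ∪ {v, w} is connected and S ∪ {v} is an independent set of size |S| + 1. -/
open SimpleGraph

namespace SimpleGraph

variable {V : Type*} {G : SimpleGraph V}

/-- The witness `v` is the last vertex of the walk before it enters the neighbourhood of `D`. -/
lemma Walk.exists_adj_adj_mem_of_not_adj {D : Set V} :
    ∀ {x u : V}, G.Walk x u → x ∉ D → (∀ z ∈ D, ¬ G.Adj z x) → u ∈ D →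
      ∃ v w, v ∉ D ∧ (∀ z ∈ D, ¬ G.Adj z v) ∧ G.Adj v w ∧ ∃ z ∈ D, G.Adj w z
  | _, _, .nil, hx, _, hu => absurd hu hx
  | x, _, .cons (v := y) hxy p, hx, hxD, hu => by
    have hy : y ∉ D := fun hy => hxD y hy hxy.symm
    by_cases hyD : ∃ z ∈ D, G.Adj y z
    · exact ⟨x, y, hx, hxD, hxy, hyD⟩
    · push Not at hyD
      exact p.exists_adj_adj_mem_of_not_adj hy (fun z hz h => hyD z hz h.symm) hu

lemma Connected.exists_adj_adj_mem_of_not_isDomSet (hG : G.Connected) {D : Set V}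
    (hD : D.Nonempty) (hdom : ¬ IsDomSet G D) :
    ∃ v w, v ∉ D ∧ (∀ z ∈ D, ¬ G.Adj z v) ∧ G.Adj v w ∧ ∃ z ∈ D, G.Adj w z := by
  unfold IsDomSet at hdom
  push Not at hdom
  obtain ⟨x, hx, hxD⟩ := hdom
  obtain ⟨u, hu⟩ := hD
  exact (hG.preconnected x u).some.exists_adj_adj_mem_of_not_adj hx hxD hu

lemma Connected.sInf_dist_eq_two (hG : G.Connected) {D : Set V} {v w u : V} (hv : v ∉ D)
    (hvD : ∀ z ∈ D, ¬ G.Adj z v) (hvw : G.Adj v w) (hu : u ∈ D) (hwu : G.Adj w u) :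
    sInf {d | ∃ z ∈ D, G.dist v z = d} = 2 := by
  have two_le_dist : ∀ z ∈ D, 2 ≤ G.dist v z := fun z hz =>
    hG.one_lt_dist_of_ne_of_not_adj (fun h => hv (h ▸ hz)) fun h => hvD z hz h.symm
  have hdist : G.dist v u = 2 :=
    le_antisymm (dist_le (.cons hvw (.cons hwu .nil))) (two_le_dist u hu)
  refine le_antisymm (Nat.sInf_le ⟨u, hu, hdist⟩) (le_csInf ⟨2, u, hu, hdist⟩ ?_)
  rintro _ ⟨z, hz, rfl⟩
  exact two_le_dist z hz

end SimpleGraph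

lemma IsConnSet.union_pair {V : Type*} {G : SimpleGraph V} {D : Set V} (hD : IsConnSet G D)
    {v w u : V} (hvw : G.Adj v w) (hu : u ∈ D) (hwu : G.Adj w u) :
    IsConnSet G (D ∪ {v, w}) :=
  connected_induce_union hD.preconnected (induce_pair_connected_of_adj hvw).preconnected hu
    (by simp) hwu.symm

lemma IsIndepSet.insert {V : Type*} {G : SimpleGraph V} {s : Set V}
    (hs : _root_.IsIndepSet G s) {v : V} (hv : ∀ z ∈ s, ¬ G.Adj z v) :
    _root_.IsIndepSet G (insert v s) :=
  Set.Pairwise.insert hs fun z hz _ => ⟨fun h => hv z hz h.symm, hv z hz⟩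

theorem stmt_11_general {V : Type*} [DecidableEq V] (G : SimpleGraph V)
    (hG : G.Connected) (D S : Finset V) (hSD : S ⊆ D)
    (hconn : IsConnSet G ↑D) (hindep : _root_.IsIndepSet G ↑S)
    (hdom : ¬ IsDomSet G ↑D) :
    ∃ v w : V, sInf {d | ∃ u ∈ D, G.dist v u = d} = 2 ∧
      G.Adj w v ∧ (∃ u ∈ D, G.Adj w u) ∧
      IsConnSet G ↑(D ∪ {v, w}) ∧
      _root_.IsIndepSet G ↑(insert v S) ∧ (insert v S).card = S.card + 1 := by
  obtain ⟨⟨u, hu⟩⟩ := hconn.nonempty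
  obtain ⟨v, w, hv, hvD, hvw, z, hz, hwz⟩ :=
    hG.exists_adj_adj_mem_of_not_isDomSet ⟨u, hu⟩ hdom
  have hvS : ∀ s ∈ (S : Set V), ¬ G.Adj s v := fun s hs => hvD s (hSD hs)
  refine ⟨v, w, hG.sInf_dist_eq_two hv hvD hvw hz hwz, hvw.symm, ⟨z, hz, hwz⟩, ?_, ?_, ?_⟩
  · simpa using hconn.union_pair hvw hz hwz
  · simpa using hindep.insert hvS
  · exact Finset.card_insert_of_notMem fun h => hv (hSD h)

theorem stmt_11 {V : Type*} [Fintype V] [DecidableEq V] (G : SimpleGraph V)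
    (hG : G.Connected) (D S : Finset V) (hSD : S ⊆ D)
    (hconn : IsConnSet G ↑D) (hindep : _root_.IsIndepSet G ↑S)
    (hcard : D.card = 2 * S.card - 1) (hdom : ¬ IsDomSet G ↑D) :
    ∃ v w : V, sInf {d | ∃ u ∈ D, G.dist v u = d} = 2 ∧
      G.Adj w v ∧ (∃ u ∈ D, G.Adj w u) ∧
      IsConnSet G ↑(D ∪ {v, w}) ∧
      _root_.IsIndepSet G ↑(insert v S) ∧ (insert v S).card = S.card + 1 :=
  stmt_11_general G hG D S hSD hconn hindep hdom
end
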